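/- arXiv:2604.02889 — 2 statements merged into one kernel-verified Lean document; each statement's English description precedes it below -/
import Mathlib

section
/- Let d ≥ 1 and let A : ℝ → Matrix (Fin d) (Fin d) ℝ be differentiable on [0,1) with A(0) = I and A(t) invertible for every t ∈ [0,1). Define F(t) := A'(t) · A(t)⁻¹ and assume F is continuous on [0,1). Fix x₀ ∈ ℝᵈ. If m : ℝ → ℝᵈ satisfies m'(t) = F(t) ·ᵥ m(t) for all t ∈ [0,1) with m(0) = x₀, then m(t) = A(t) ·ᵥ x₀ for all t ∈ [0,1). -/
open Matrix Set

/-!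
Conjugating by `A(t)⁻¹` removes the drift: by the product rule and `(A⁻¹)' = -A⁻¹ A' A⁻¹`,
the derivative of `A(t)⁻¹ m(t)` is `-A⁻¹ A' A⁻¹ m + A⁻¹ (A' A⁻¹) m = 0`. Hence `A(t)⁻¹ m(t)` is
constant on the interval, equal to its value `x₀` at `t = 0`, i.e. `m(t) = A(t) x₀`.
-/

namespace Matrix

variable {n : Type*} [Fintype n] [DecidableEq n] {s : Set ℝ}

section

-- The `L∞` operator norm makes square matrices a Banach algebra; its topology is the entrywise one.
attribute [local instance] Matrix.linftyOpNormedRing Matrix.linftyOpNormedAlgebra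

variable {t : ℝ}

theorem hasDerivWithinAt_iff_entries {A : ℝ → Matrix n n ℝ} {A' : Matrix n n ℝ} :
    HasDerivWithinAt A A' s t ↔ ∀ i j, HasDerivWithinAt (fun u => A u i j) (A' i j) s t := by
  refine hasDerivWithinAt_iff_tendsto_slope.trans ?_
  simp only [hasDerivWithinAt_iff_tendsto_slope]
  exact tendsto_pi_nhds.trans (forall_congr' fun i => tendsto_pi_nhds)

theorem _root_.HasDerivWithinAt.matrix_inv {A : ℝ → Matrix n n ℝ} {A' : Matrix n n ℝ}
    (hA : HasDerivWithinAt A A' s t) (ht : IsUnit (A t)) :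
    HasDerivWithinAt (fun u => (A u)⁻¹) (-((A t)⁻¹ * A' * (A t)⁻¹)) s t := by
  obtain ⟨u, hu⟩ := ht
  have hinv : HasFDerivAt Ring.inverse
      (-ContinuousLinearMap.mulLeftRight ℝ _ (Ring.inverse (A t)) (Ring.inverse (A t))) (A t) := by
    rw [← hu, Ring.inverse_unit]
    exact hasFDerivAt_ringInverse u
  have h := hinv.comp_hasDerivWithinAt t hA
  rw [_root_.neg_apply, ContinuousLinearMap.mulLeftRight_apply] at h
  simp_rw [nonsing_inv_eq_ringInverse]
  exact h

theorem _root_.HasDerivWithinAt.matrix_mulVec {A : ℝ → Matrix n n ℝ} {A' : Matrix n n ℝ}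
    {v : ℝ → n → ℝ} {v' : n → ℝ}
    (hA : HasDerivWithinAt A A' s t) (hv : HasDerivWithinAt v v' s t) :
    HasDerivWithinAt (fun u => A u *ᵥ v u) (A' *ᵥ v t + A t *ᵥ v') s t := by
  rw [hasDerivWithinAt_iff_entries] at hA
  rw [hasDerivWithinAt_pi] at hv ⊢
  intro i
  simpa [mulVec, dotProduct, Finset.sum_add_distrib] using
    HasDerivWithinAt.fun_sum fun j _ => (hA i j).mul (hv j)

end

variable {A A' : ℝ → Matrix n n ℝ} {m : ℝ → n → ℝ}

theorem hasDerivWithinAt_inv_mulVec_of_linear_ode {t : ℝ}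
    (hA : HasDerivWithinAt A (A' t) s t) (hAt : IsUnit (A t))
    (hm : HasDerivWithinAt m ((A' t * (A t)⁻¹) *ᵥ m t) s t) :
    HasDerivWithinAt (fun u => (A u)⁻¹ *ᵥ m u) 0 s t := by
  convert (hA.matrix_inv hAt).matrix_mulVec hm using 1
  rw [mulVec_mulVec, ← Matrix.mul_assoc, neg_mulVec, neg_add_cancel]

theorem inv_mulVec_eq_of_linear_ode (hs : Convex ℝ s)
    (hA : ∀ t ∈ s, HasDerivWithinAt A (A' t) s t) (hAinv : ∀ t ∈ s, IsUnit (A t))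
    (hm : ∀ t ∈ s, HasDerivWithinAt m ((A' t * (A t)⁻¹) *ᵥ m t) s t)
    {t₀ t : ℝ} (ht₀ : t₀ ∈ s) (ht : t ∈ s) :
    (A t)⁻¹ *ᵥ m t = (A t₀)⁻¹ *ᵥ m t₀ := by
  have h := hs.norm_image_sub_le_of_norm_hasDerivWithin_le (C := 0)
    (fun u hu => hasDerivWithinAt_inv_mulVec_of_linear_ode (hA u hu) (hAinv u hu) (hm u hu))
    (fun _ _ => norm_zero.le) ht₀ ht
  rwa [zero_mul, norm_le_zero_iff, sub_eq_zero] at h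

end Matrix

theorem mean_matching_general
    (d : ℕ)
    (A A' : ℝ → Matrix (Fin d) (Fin d) ℝ)
    (hA : ∀ t ∈ Ico (0:ℝ) 1, ∀ i j,
      HasDerivWithinAt (fun s => A s i j) (A' t i j) (Ico (0:ℝ) 1) t)
    (hA0 : A 0 = 1)
    (hAinv : ∀ t ∈ Ico (0:ℝ) 1, IsUnit (A t))
    (x₀ : Fin d → ℝ) (m : ℝ → Fin d → ℝ)
    (hm : ∀ t ∈ Ico (0:ℝ) 1,
      HasDerivWithinAt m ((A' t * (A t)⁻¹).mulVec (m t)) (Ico (0:ℝ) 1) t)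
    (hm0 : m 0 = x₀) :
    ∀ t ∈ Ico (0:ℝ) 1, m t = (A t).mulVec x₀ := by
  intro t ht
  have hconst : (A t)⁻¹ *ᵥ m t = x₀ := by
    rw [inv_mulVec_eq_of_linear_ode (convex_Ico 0 1)
      (fun u hu => hasDerivWithinAt_iff_entries.2 (hA u hu)) hAinv hm ⟨le_rfl, one_pos⟩ ht,
      hA0, hm0, inv_one, one_mulVec]
  rw [← hconst, mulVec_mulVec, mul_nonsing_inv _ ((isUnit_iff_isUnit_det _).1 (hAinv t ht)),
    one_mulVec]

/-- The solution of the linear mean ODE `m' = F m` with `F = A' A⁻¹`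
and `m 0 = x₀` is `m t = A t ·ᵥ x₀` on `[0,1)`. -/
theorem mean_matching
    (d : ℕ) (hd : 1 ≤ d)
    (A A' : ℝ → Matrix (Fin d) (Fin d) ℝ)
    (hA : ∀ t ∈ Ico (0:ℝ) 1, ∀ i j,
      HasDerivWithinAt (fun s => A s i j) (A' t i j) (Ico (0:ℝ) 1) t)
    (hA0 : A 0 = 1)
    (hAinv : ∀ t ∈ Ico (0:ℝ) 1, IsUnit (A t))
    (hFcont : ContinuousOn (fun t => A' t * (A t)⁻¹) (Ico (0:ℝ) 1))
    (x₀ : Fin d → ℝ) (m : ℝ → Fin d → ℝ)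
    (hm : ∀ t ∈ Ico (0:ℝ) 1,
      HasDerivWithinAt m ((A' t * (A t)⁻¹).mulVec (m t)) (Ico (0:ℝ) 1) t)
    (hm0 : m 0 = x₀) :
    ∀ t ∈ Ico (0:ℝ) 1, m t = (A t).mulVec x₀ :=
  mean_matching_general d A A' hA hA0 hAinv x₀ m hm hm0
end

section
/- Let d ≥ 1 and let A : ℝ → Matrix (Fin d) (Fin d) ℝ be differentiable on [0,1) with A(0) = I and A(t) invertible for every t ∈ [0,1), and let b : ℝ → ℝᵈ be differentiable on [0,1) with b(0) = 0. Define F(t) := A'(t) · A(t)⁻¹ and f(t) := b'(t) − F(t) ·ᵥ b(t), and assume F and f are continuous on [0,1). Fix x₀ ∈ ℝᵈ. If m : ℝ → ℝᵈ satisfies m'(t) = F(t) ·ᵥ m(t) + f(t) for all t ∈ [0,1) with m(0) = x₀, then m(t) = A(t) ·ᵥ x₀ + b(t) for all t ∈ [0,1). -/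
/-! Both `m` and `t ↦ A t ·ᵥ x₀ + b t` solve `ẏ = F y + f` with the same initial value: for the
latter this is `F A = Ȧ`. Their difference solves the homogeneous equation `ė = F e`, `e 0 = 0`,
and on each compact `[0, t₁] ⊆ [0, 1)` the continuous `F` is bounded, so Grönwall's inequality
forces `e = 0`. -/

open Matrix Set
open Filter Topology

section AffineODE

variable {E : Type*} [NormedAddCommGroup E] [NormedSpace ℝ E]
  {F : ℝ → E →L[ℝ] E} {g u w : ℝ → E} {a b : ℝ}

theorem ODE_solution_unique_affine_Icc (hF : ContinuousOn F (Icc a b))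
    (hu : ContinuousOn u (Icc a b))
    (hu' : ∀ t ∈ Ico a b, HasDerivWithinAt u (F t (u t) + g t) (Ici t) t)
    (hw : ContinuousOn w (Icc a b))
    (hw' : ∀ t ∈ Ico a b, HasDerivWithinAt w (F t (w t) + g t) (Ici t) t)
    (ha : u a = w a) : EqOn u w (Icc a b) := by
  obtain ⟨K, hK⟩ := isCompact_Icc.exists_bound_of_continuousOn hF
  have hdiff : ∀ t ∈ Ico a b, HasDerivWithinAt (u - w) (F t (u t - w t)) (Ici t) t := by
    intro t ht
    simpa [map_sub] using (hu' t ht).sub (hw' t ht)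
  intro t ht
  refine sub_eq_zero.mp <| eq_zero_of_abs_deriv_le_mul_abs_self_of_eq_zero_right (K := K)
    (hu.sub hw) hdiff (sub_eq_zero.mpr ha) (fun s hs => ?_) t ht
  exact (F s).le_of_opNorm_le (hK s (Ico_subset_Icc_self hs)) _

theorem ODE_solution_unique_affine_Ico (hF : ContinuousOn F (Ico a b))
    (hu : ∀ t ∈ Ico a b, HasDerivWithinAt u (F t (u t) + g t) (Ico a b) t)
    (hw : ∀ t ∈ Ico a b, HasDerivWithinAt w (F t (w t) + g t) (Ico a b) t)
    (ha : u a = w a) : EqOn u w (Ico a b) := by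
  intro c hc
  have hsub : Icc a c ⊆ Ico a b := Icc_subset_Ico_right hc.2
  have hright : ∀ t ∈ Ico a c, Ico a b ∈ 𝓝[≥] t := fun t ht =>
    mem_of_superset (Ico_mem_nhdsGE (ht.2.trans hc.2)) (Ico_subset_Ico_left ht.1)
  refine ODE_solution_unique_affine_Icc (hF.mono hsub)
    (fun t ht => ((hu t (hsub ht)).continuousWithinAt).mono hsub)
    (fun t ht => (hu t (hsub (Ico_subset_Icc_self ht))).mono_of_mem_nhdsWithin (hright t ht))
    (fun t ht => ((hw t (hsub ht)).continuousWithinAt).mono hsub)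
    (fun t ht => (hw t (hsub (Ico_subset_Icc_self ht))).mono_of_mem_nhdsWithin (hright t ht))
    ha ⟨hc.1, le_rfl⟩

end AffineODE

theorem Matrix.ODE_solution_unique_affine_Ico {n : Type*} [Fintype n] [DecidableEq n] {a b : ℝ}
    {F : ℝ → Matrix n n ℝ} {g u w : ℝ → n → ℝ} (hF : ContinuousOn F (Ico a b))
    (hu : ∀ t ∈ Ico a b, HasDerivWithinAt u (F t *ᵥ u t + g t) (Ico a b) t)
    (hw : ∀ t ∈ Ico a b, HasDerivWithinAt w (F t *ᵥ w t + g t) (Ico a b) t)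
    (ha : u a = w a) : EqOn u w (Ico a b) :=
  let toCLM := (Matrix.toLin'.trans LinearMap.toContinuousLinearMap :
    Matrix n n ℝ ≃ₗ[ℝ] (n → ℝ) →L[ℝ] n → ℝ)
  _root_.ODE_solution_unique_affine_Ico (F := fun t => toCLM (F t))
    (toCLM.toLinearMap.continuous_of_finiteDimensional.comp_continuousOn hF) hu hw ha

theorem HasDerivWithinAt.matrix_mulVec_const {𝕜 : Type*} [NontriviallyNormedField 𝕜]
    {m n : Type*} [Fintype n] {A : 𝕜 → Matrix m n 𝕜} {A' : Matrix m n 𝕜} {s : Set 𝕜} {t : 𝕜}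
    (hA : ∀ i j, HasDerivWithinAt (fun r => A r i j) (A' i j) s t) (x : n → 𝕜) :
    HasDerivWithinAt (fun r => A r *ᵥ x) (A' *ᵥ x) s t :=
  hasDerivWithinAt_pi.mpr fun i => HasDerivWithinAt.fun_sum fun j _ => (hA i j).mul_const (x j)

theorem affine_mean_matching_general
    (d : ℕ)
    (A A' : ℝ → Matrix (Fin d) (Fin d) ℝ)
    (hA : ∀ t ∈ Ico (0:ℝ) 1, ∀ i j,
      HasDerivWithinAt (fun s => A s i j) (A' t i j) (Ico (0:ℝ) 1) t)
    (hA0 : A 0 = 1)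
    (hAinv : ∀ t ∈ Ico (0:ℝ) 1, IsUnit (A t))
    (b b' : ℝ → Fin d → ℝ)
    (hb : ∀ t ∈ Ico (0:ℝ) 1, HasDerivWithinAt b (b' t) (Ico (0:ℝ) 1) t)
    (hb0 : b 0 = 0)
    (hFcont : ContinuousOn (fun t => A' t * (A t)⁻¹) (Ico (0:ℝ) 1))
    (x₀ : Fin d → ℝ) (m : ℝ → Fin d → ℝ)
    (hm : ∀ t ∈ Ico (0:ℝ) 1,
      HasDerivWithinAt m
        ((A' t * (A t)⁻¹).mulVec (m t) + (b' t - (A' t * (A t)⁻¹).mulVec (b t)))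
        (Ico (0:ℝ) 1) t)
    (hm0 : m 0 = x₀) :
    ∀ t ∈ Ico (0:ℝ) 1, m t = (A t).mulVec x₀ + b t := by
  have hmean : ∀ t ∈ Ico (0:ℝ) 1, HasDerivWithinAt (fun s => A s *ᵥ x₀ + b s)
      ((A' t * (A t)⁻¹) *ᵥ (A t *ᵥ x₀ + b t) + (b' t - (A' t * (A t)⁻¹) *ᵥ b t))
      (Ico (0:ℝ) 1) t := by
    intro t ht
    have hFA : A' t * (A t)⁻¹ * A t = A' t :=
      nonsing_inv_mul_cancel_right _ _ ((isUnit_iff_isUnit_det _).mp (hAinv t ht))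
    refine ((HasDerivWithinAt.matrix_mulVec_const (hA t ht) x₀).add (hb t ht)).congr_deriv ?_
    rw [mulVec_add, mulVec_mulVec, hFA]
    abel
  exact Matrix.ODE_solution_unique_affine_Ico hFcont hm hmean (by simp [hm0, hA0, hb0])

/-- Affine mean matching: with drift `F = A' A⁻¹` and affine term
`f = b' − F b`, the solution of `m' = F m + f`, `m 0 = x₀`, is `m t = A t ·ᵥ x₀ + b t`
on `[0,1)`. -/
theorem affine_mean_matching
    (d : ℕ) (hd : 1 ≤ d)
    (A A' : ℝ → Matrix (Fin d) (Fin d) ℝ)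
    (hA : ∀ t ∈ Ico (0:ℝ) 1, ∀ i j,
      HasDerivWithinAt (fun s => A s i j) (A' t i j) (Ico (0:ℝ) 1) t)
    (hA0 : A 0 = 1)
    (hAinv : ∀ t ∈ Ico (0:ℝ) 1, IsUnit (A t))
    (b b' : ℝ → Fin d → ℝ)
    (hb : ∀ t ∈ Ico (0:ℝ) 1, HasDerivWithinAt b (b' t) (Ico (0:ℝ) 1) t)
    (hb0 : b 0 = 0)
    (hFcont : ContinuousOn (fun t => A' t * (A t)⁻¹) (Ico (0:ℝ) 1))
    (hfcont : ContinuousOn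
      (fun t => b' t - (A' t * (A t)⁻¹).mulVec (b t)) (Ico (0:ℝ) 1))
    (x₀ : Fin d → ℝ) (m : ℝ → Fin d → ℝ)
    (hm : ∀ t ∈ Ico (0:ℝ) 1,
      HasDerivWithinAt m
        ((A' t * (A t)⁻¹).mulVec (m t) + (b' t - (A' t * (A t)⁻¹).mulVec (b t)))
        (Ico (0:ℝ) 1) t)
    (hm0 : m 0 = x₀) :
    ∀ t ∈ Ico (0:ℝ) 1, m t = (A t).mulVec x₀ + b t :=
  affine_mean_matching_general d A A' hA hA0 hAinv b b' hb hb0 hFcont x₀ m hm hm0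
end
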